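/- arXiv:2601.16142 — 3 statements merged into one kernel-verified Lean document; each statement's English description precedes it below -/
import Mathlib

section
/- Let f : X → X be monotone and non-expansive on a 0-box X ⊆ ℝ_{≥0}^d, let q ∈ (0,1), and define f_q = q·f (pointwise scalar multiplication). Then f_q maps X to X, is a q-contraction, and its least fixpoint satisfies μf_q ≤ μf. Moreover, sup_{q<1} μf_q = μf where μ denotes the least fixpoint of the ω-continuous extension to [0,∞]^d. -/
/-- The 0-box `{x ∈ ℝ≥0^d | x ≤ x*}` for `x* ∈ [0,∞]^d`. -/
def zeroBox (d : ℕ) (xstar : Fin d → ENNReal) : Set (Fin d → ℝ) :=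
  {x | ∀ i, 0 ≤ x i ∧ ENNReal.ofReal (x i) ≤ xstar i}

/-- The ω-continuous extension of `f : X → X` to `[0,∞]^d`:
`f̄(x) = sup { f(y) | y ∈ X, y ≤ x }`. -/
noncomputable def extendF (d : ℕ) (xstar : Fin d → ENNReal)
    (f : (Fin d → ℝ) → Fin d → ℝ) : (Fin d → ENNReal) → Fin d → ENNReal :=
  fun x i =>
    ⨆ y : {y : Fin d → ℝ // y ∈ zeroBox d xstar ∧ ∀ j, ENNReal.ofReal (y j) ≤ x j},
      ENNReal.ofReal (f y.1 i)

/-- The least fixpoint `μf = sup_n f̄^n(0)` of the ω-continuous extension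
(Kleene's fixpoint theorem). -/
noncomputable def muF (d : ℕ) (xstar : Fin d → ENNReal)
    (f : (Fin d → ℝ) → Fin d → ℝ) : Fin d → ENNReal :=
  ⨆ n, (extendF d xstar f)^[n] ⊥

section Aux

variable {d : ℕ} {xstar : Fin d → ENNReal}

lemma zero_mem_zeroBox : (0 : Fin d → ℝ) ∈ zeroBox d xstar :=
  fun i => ⟨le_rfl, by simp⟩

lemma iter_mem_zeroBox {g : (Fin d → ℝ) → Fin d → ℝ}
    (hmaps : ∀ x ∈ zeroBox d xstar, g x ∈ zeroBox d xstar) :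
    ∀ n, g^[n] 0 ∈ zeroBox d xstar := by
  intro n
  induction n with
  | zero => exact zero_mem_zeroBox
  | succ n ih => rw [Function.iterate_succ_apply']; exact hmaps _ ih

lemma extendF_eval {g : (Fin d → ℝ) → Fin d → ℝ}
    (hmono : ∀ x ∈ zeroBox d xstar, ∀ y ∈ zeroBox d xstar, x ≤ y → g x ≤ g y)
    {x : Fin d → ℝ} (hx : x ∈ zeroBox d xstar) :
    extendF d xstar g (fun j => ENNReal.ofReal (x j)) = fun i => ENNReal.ofReal (g x i) := by
  funext i
  apply le_antisymm
  · apply iSup_le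
    rintro ⟨y, hy, hle⟩
    apply ENNReal.ofReal_le_ofReal
    have hyx : y ≤ x := fun j => (ENNReal.ofReal_le_ofReal_iff (hx j).1).mp (hle j)
    exact hmono y hy x hx hyx i
  · exact le_iSup
      (fun (y : {y : Fin d → ℝ // y ∈ zeroBox d xstar ∧
          ∀ j, ENNReal.ofReal (y j) ≤ ENNReal.ofReal (x j)}) => ENNReal.ofReal (g y.1 i))
      ⟨x, hx, fun j => le_rfl⟩

lemma muF_eq {g : (Fin d → ℝ) → Fin d → ℝ}
    (hmaps : ∀ x ∈ zeroBox d xstar, g x ∈ zeroBox d xstar)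
    (hmono : ∀ x ∈ zeroBox d xstar, ∀ y ∈ zeroBox d xstar, x ≤ y → g x ≤ g y) :
    muF d xstar g = fun i => ⨆ n, ENNReal.ofReal (g^[n] 0 i) := by
  have h : ∀ n, (extendF d xstar g)^[n] ⊥ = fun i => ENNReal.ofReal (g^[n] 0 i) := by
    intro n
    induction n with
    | zero => funext i; simp
    | succ n ih =>
      rw [Function.iterate_succ_apply', ih, Function.iterate_succ_apply']
      exact extendF_eval hmono (iter_mem_zeroBox hmaps n)
  funext i
  rw [muF]
  rw [iSup_apply]
  exact iSup_congr fun n => by rw [h n]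

end Aux

/-- For monotone non-expansive `f` on a 0-box `X` and `q ∈ (0,1)`, the map
`f_q = q·f` maps `X` to `X`, is a `q`-contraction, and satisfies `μf_q ≤ μf`;
moreover `sup_{q<1} μf_q = μf`. -/
theorem scaled_contraction_lfp (d : ℕ) (xstar : Fin d → ENNReal)
    (f : (Fin d → ℝ) → Fin d → ℝ)
    (hmaps : ∀ x ∈ zeroBox d xstar, f x ∈ zeroBox d xstar)
    (hmono : ∀ x ∈ zeroBox d xstar, ∀ y ∈ zeroBox d xstar, x ≤ y → f x ≤ f y)
    (hne : ∀ x ∈ zeroBox d xstar, ∀ y ∈ zeroBox d xstar, ‖f x - f y‖ ≤ ‖x - y‖)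
    (q : ℝ) (hq : q ∈ Set.Ioo (0:ℝ) 1) :
    (∀ x ∈ zeroBox d xstar, q • f x ∈ zeroBox d xstar) ∧
    (∀ x ∈ zeroBox d xstar, ∀ y ∈ zeroBox d xstar,
      ‖q • f x - q • f y‖ ≤ q * ‖x - y‖) ∧
    muF d xstar (fun x => q • f x) ≤ muF d xstar f ∧
    (⨆ r : Set.Ioo (0:ℝ) 1, muF d xstar (fun x => r.1 • f x)) = muF d xstar f := by
  -- generic facts about `r • f` for `r ∈ (0,1)`
  have hmaps_r : ∀ r ∈ Set.Ioo (0:ℝ) 1, ∀ x ∈ zeroBox d xstar,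
      (fun x => r • f x) x ∈ zeroBox d xstar := by
    intro r hr x hx i
    obtain ⟨h0, h1⟩ := hmaps x hx i
    refine ⟨mul_nonneg hr.1.le h0, le_trans (ENNReal.ofReal_le_ofReal ?_) h1⟩
    show r * f x i ≤ f x i
    nlinarith [hr.2]
  have hmono_r : ∀ r ∈ Set.Ioo (0:ℝ) 1, ∀ x ∈ zeroBox d xstar, ∀ y ∈ zeroBox d xstar,
      x ≤ y → (fun x => r • f x) x ≤ (fun x => r • f x) y := by
    intro r hr x hx y hy hxy i
    exact mul_le_mul_of_nonneg_left (hmono x hx y hy hxy i) hr.1.le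
  -- real-iterate comparison
  have iter_le : ∀ r ∈ Set.Ioo (0:ℝ) 1, ∀ n,
      (fun x => r • f x)^[n] 0 ≤ f^[n] 0 := by
    intro r hr n
    induction n with
    | zero => exact le_rfl
    | succ n ih =>
      rw [Function.iterate_succ_apply', Function.iterate_succ_apply']
      intro i
      have hg := iter_mem_zeroBox (hmaps_r r hr) n
      have hf := iter_mem_zeroBox hmaps n
      have h1 : f ((fun x => r • f x)^[n] 0) ≤ f (f^[n] 0) := hmono _ hg _ hf ih
      have h0 : 0 ≤ f ((fun x => r • f x)^[n] 0) i := (hmaps _ hg i).1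
      have : r * f ((fun x => r • f x)^[n] 0) i ≤ f ((fun x => r • f x)^[n] 0) i := by
        nlinarith [hr.2]
      exact le_trans this (h1 i)
  have mu_le : ∀ r ∈ Set.Ioo (0:ℝ) 1,
      muF d xstar (fun x => r • f x) ≤ muF d xstar f := by
    intro r hr
    rw [muF_eq (hmaps_r r hr) (hmono_r r hr), muF_eq hmaps hmono]
    intro i
    exact iSup_mono fun n => ENNReal.ofReal_le_ofReal (iter_le r hr n i)
  refine ⟨hmaps_r q hq, ?_, mu_le q hq, ?_⟩
  · intro x hx y hy
    rw [← smul_sub, norm_smul, Real.norm_eq_abs, abs_of_pos hq.1]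
    exact mul_le_mul_of_nonneg_left (hne x hx y hy) hq.1.le
  · -- the supremum equality
    apply le_antisymm
    · exact iSup_le fun r => mu_le r.1 r.2
    · rw [muF_eq hmaps hmono]
      intro i
      simp only [iSup_apply]
      apply iSup_le
      intro n
      -- error estimate
      set C : ℝ := ∑ k ∈ Finset.range n, ‖f^[k+1] (0 : Fin d → ℝ)‖ with hCdef
      have hC : 0 ≤ C := Finset.sum_nonneg fun k _ => norm_nonneg _
      have est : ∀ r ∈ Set.Ioo (0:ℝ) 1,
          ‖(fun x => r • f x)^[n] 0 - f^[n] 0‖ ≤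
            (1 - r) * ∑ k ∈ Finset.range n, ‖f^[k+1] (0 : Fin d → ℝ)‖ := by
        intro r hr
        clear hCdef hC
        induction n with
        | zero => simp
        | succ n ih =>
          rw [Function.iterate_succ_apply', Function.iterate_succ_apply',
            Finset.sum_range_succ]
          have hg := iter_mem_zeroBox (hmaps_r r hr) n
          have hf := iter_mem_zeroBox hmaps n
          have h1 : ‖r • f ((fun x => r • f x)^[n] 0) - r • f (f^[n] 0)‖ ≤
              r * ‖(fun x => r • f x)^[n] 0 - f^[n] 0‖ := by
            rw [← smul_sub, norm_smul, Real.norm_eq_abs, abs_of_pos hr.1]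
            exact mul_le_mul_of_nonneg_left (hne _ hg _ hf) hr.1.le
          have h2 : ‖r • f (f^[n] 0) - f (f^[n] 0)‖ = (1 - r) * ‖f (f^[n] 0)‖ := by
            have : r • f (f^[n] 0) - f (f^[n] 0) = (r - 1) • f (f^[n] 0) := by
              rw [sub_smul, one_smul]
            rw [this, norm_smul, Real.norm_eq_abs, abs_of_neg (by linarith [hr.2])]
            ring
          have htri : ‖r • f ((fun x => r • f x)^[n] 0) - f (f^[n] 0)‖ ≤
              ‖r • f ((fun x => r • f x)^[n] 0) - r • f (f^[n] 0)‖ +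
              ‖r • f (f^[n] 0) - f (f^[n] 0)‖ := norm_sub_le_norm_sub_add_norm_sub _ _ _
          have hsum : 0 ≤ ∑ k ∈ Finset.range n, ‖f^[k+1] (0 : Fin d → ℝ)‖ :=
            Finset.sum_nonneg fun k _ => norm_nonneg _
          have hnrm : 0 ≤ ‖(fun x => r • f x)^[n] 0 - f^[n] 0‖ := norm_nonneg _
          have hfn : ‖f (f^[n] 0)‖ = ‖f^[n+1] (0 : Fin d → ℝ)‖ := by
            rw [Function.iterate_succ_apply']
          nlinarith [ih, hr.1, hr.2]
      -- componentwise lower bound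
      have comp : ∀ r ∈ Set.Ioo (0:ℝ) 1,
          f^[n] 0 i - (1 - r) * C ≤ (fun x => r • f x)^[n] 0 i := by
        intro r hr
        have h := norm_le_pi_norm ((fun x => r • f x)^[n] 0 - f^[n] 0) i
        rw [Pi.sub_apply, Real.norm_eq_abs] at h
        have := abs_le.mp (le_trans h (est r hr))
        linarith [this.1]
      -- epsilon argument in ENNReal
      apply ENNReal.le_of_forall_pos_le_add
      intro ε hε _
      set εr : ℝ := (ε : ℝ) with hεr
      have hεr0 : 0 < εr := by exact_mod_cast hε
      set δ : ℝ := min (1/2) (εr / (C + 1)) with hδdef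
      have hδ0 : 0 < δ := lt_min (by norm_num) (div_pos hεr0 (by linarith))
      have hδhalf : δ ≤ 1/2 := min_le_left _ _
      set r : ℝ := 1 - δ with hrdef
      have hrIoo : r ∈ Set.Ioo (0:ℝ) 1 := ⟨by simp only [hrdef]; linarith, by simp only [hrdef]; linarith⟩
      have hδC : δ * C ≤ εr := by
        have hδ2 : δ ≤ εr / (C + 1) := min_le_right _ _
        have : δ * (C + 1) ≤ εr := by
          rw [← div_mul_cancel₀ εr (show (C:ℝ) + 1 ≠ 0 by linarith)]
          exact mul_le_mul_of_nonneg_right hδ2 (by linarith)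
        nlinarith
      have key : ENNReal.ofReal (f^[n] 0 i - δ * C) ≤
          ⨆ r : Set.Ioo (0:ℝ) 1, muF d xstar (fun x => r.1 • f x) i := by
        have h1 : ENNReal.ofReal (f^[n] 0 i - δ * C) ≤
            ENNReal.ofReal ((fun x => r • f x)^[n] 0 i) := by
          apply ENNReal.ofReal_le_ofReal
          have := comp r hrIoo
          have heq : (1 - r) = δ := by rw [hrdef]; ring
          linarith [heq ▸ this]
        refine le_trans h1 ?_
        have h2 : ENNReal.ofReal ((fun x => r • f x)^[n] 0 i) ≤
            muF d xstar (fun x => r • f x) i := by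
          rw [muF_eq (hmaps_r r hrIoo) (hmono_r r hrIoo)]
          exact le_iSup (fun m => ENNReal.ofReal ((fun x => r • f x)^[m] 0 i)) n
        refine le_trans h2 ?_
        exact le_iSup (fun s : Set.Ioo (0:ℝ) 1 => muF d xstar (fun x => s.1 • f x) i)
          ⟨r, hrIoo⟩
      calc ENNReal.ofReal (f^[n] 0 i)
          = ENNReal.ofReal ((f^[n] 0 i - δ * C) + δ * C) := by ring_nf
        _ ≤ ENNReal.ofReal (f^[n] 0 i - δ * C) + ENNReal.ofReal (δ * C) :=
            ENNReal.ofReal_add_le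
        _ ≤ (⨆ r : Set.Ioo (0:ℝ) 1, muF d xstar (fun x => r.1 • f x) i) + ε :=
            add_le_add key (by
              rw [← ENNReal.ofReal_coe_nnreal]
              exact ENNReal.ofReal_le_ofReal hδC)
end

section
/- Let f : ℝ_{≥0}^d → ℝ_{≥0}^d be a monotone and non-expansive map, and let q ∈ ℝ_{≥0}^d with μf ≤ q such that f^n(q) < q strictly in every component for some n = 2^k. Then there exists p with μf ≤ p ≤ q such that f(p) < p strictly in every component. -/
private lemma iter_maps (d : ℕ) (f : (Fin d → ℝ) → Fin d → ℝ)
    (hmaps : ∀ x : Fin d → ℝ, (∀ i, 0 ≤ x i) → ∀ i, 0 ≤ f x i) :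
    ∀ (n : ℕ) (x : Fin d → ℝ), (∀ i, 0 ≤ x i) → ∀ i, 0 ≤ f^[n] x i := by
  intro n
  induction n with
  | zero => intro x hx i; simpa using hx i
  | succ n ih =>
      intro x hx i
      rw [Function.iterate_succ_apply]
      exact ih (f x) (hmaps x hx) i

private lemma iter_mono (d : ℕ) (f : (Fin d → ℝ) → Fin d → ℝ)
    (hmaps : ∀ x : Fin d → ℝ, (∀ i, 0 ≤ x i) → ∀ i, 0 ≤ f x i)
    (hmono : ∀ x y : Fin d → ℝ, (∀ i, 0 ≤ x i) → (∀ i, 0 ≤ y i) → x ≤ y → f x ≤ f y) :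
    ∀ (n : ℕ) (x y : Fin d → ℝ), (∀ i, 0 ≤ x i) → (∀ i, 0 ≤ y i) → x ≤ y →
      f^[n] x ≤ f^[n] y := by
  intro n
  induction n with
  | zero => intro x y _ _ h; simpa using h
  | succ n ih =>
      intro x y hx hy h
      rw [Function.iterate_succ_apply, Function.iterate_succ_apply]
      exact ih (f x) (f y) (hmaps x hx) (hmaps y hy) (hmono x y hx hy h)

private lemma iter_ne (d : ℕ) (f : (Fin d → ℝ) → Fin d → ℝ)
    (hmaps : ∀ x : Fin d → ℝ, (∀ i, 0 ≤ x i) → ∀ i, 0 ≤ f x i)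
    (hne : ∀ x y : Fin d → ℝ, (∀ i, 0 ≤ x i) → (∀ i, 0 ≤ y i) → ‖f x - f y‖ ≤ ‖x - y‖) :
    ∀ (n : ℕ) (x y : Fin d → ℝ), (∀ i, 0 ≤ x i) → (∀ i, 0 ≤ y i) →
      ‖f^[n] x - f^[n] y‖ ≤ ‖x - y‖ := by
  intro n
  induction n with
  | zero => intro x y _ _; simp
  | succ n ih =>
      intro x y hx hy
      rw [Function.iterate_succ_apply, Function.iterate_succ_apply]
      exact le_trans (ih (f x) (f y) (hmaps x hx) (hmaps y hy)) (hne x y hx hy)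

private lemma key_step (d : ℕ) (g : (Fin d → ℝ) → Fin d → ℝ)
    (hmaps : ∀ x : Fin d → ℝ, (∀ i, 0 ≤ x i) → ∀ i, 0 ≤ g x i)
    (hmono : ∀ x y : Fin d → ℝ, (∀ i, 0 ≤ x i) → (∀ i, 0 ≤ y i) → x ≤ y → g x ≤ g y)
    (hne : ∀ x y : Fin d → ℝ, (∀ i, 0 ≤ x i) → (∀ i, 0 ≤ y i) → ‖g x - g y‖ ≤ ‖x - y‖)
    (mu : Fin d → ℝ) (hmu0 : ∀ i, 0 ≤ mu i) (hfix : g mu = mu)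
    (q : Fin d → ℝ) (hq0 : ∀ i, 0 ≤ q i) (hmuq : mu ≤ q)
    (h2 : ∀ i, g (g q) i < q i) :
    ∃ q' : Fin d → ℝ, (∀ i, 0 ≤ q' i) ∧ mu ≤ q' ∧ q' ≤ q ∧ ∀ i, g q' i < q' i := by
  rcases Nat.eq_zero_or_pos d with hd | hd
  · subst hd
    exact ⟨q, hq0, hmuq, le_refl q, fun i => i.elim0⟩
  haveI : Nonempty (Fin d) := ⟨⟨0, hd⟩⟩
  -- translation property from non-expansiveness
  have trans : ∀ (x : Fin d → ℝ) (c : ℝ), (∀ i, 0 ≤ x i) → 0 ≤ c →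
      ∀ j, g (fun i => x i + c) j ≤ g x j + c := by
    intro x c hx hc j
    have hx' : ∀ i, 0 ≤ x i + c := fun i => add_nonneg (hx i) hc
    have h1 : ‖g (fun i => x i + c) - g x‖ ≤ ‖(fun i => x i + c) - x‖ :=
      hne _ _ hx' hx
    have h2' : ‖(fun i => x i + c) - x‖ ≤ c := by
      apply (pi_norm_le_iff_of_nonneg hc).mpr
      intro i
      simp [Real.norm_eq_abs, abs_of_nonneg hc]
    have h3 : g (fun i => x i + c) j - g x j ≤ ‖g (fun i => x i + c) - g x‖ := by
      calc g (fun i => x i + c) j - g x j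
          ≤ |g (fun i => x i + c) j - g x j| := le_abs_self _
        _ = ‖(g (fun i => x i + c) - g x) j‖ := by simp [Real.norm_eq_abs]
        _ ≤ ‖g (fun i => x i + c) - g x‖ := norm_le_pi_norm _ j
    linarith
  set ε : ℝ := Finset.univ.inf' Finset.univ_nonempty (fun i => q i - g (g q) i) with hε
  have hεpos : 0 < ε := by
    rw [hε, Finset.lt_inf'_iff]
    intro i _
    linarith [h2 i]
  have hεle : ∀ i, ε ≤ q i - g (g q) i := by
    intro i
    exact Finset.inf'_le _ (Finset.mem_univ i)
  set c : ℝ := ε / 2 with hc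
  have hcpos : 0 < c := by positivity
  refine ⟨fun i => min (q i) (g q i + c), ?_, ?_, ?_, ?_⟩
  · intro i
    exact le_min (hq0 i) (add_nonneg (hmaps q hq0 i) hcpos.le)
  · intro i
    refine le_min (hmuq i) ?_
    have : mu i = g mu i := by rw [hfix]
    have hmg : g mu i ≤ g q i := hmono mu q hmu0 hq0 hmuq i
    linarith
  · intro i; exact min_le_left _ _
  · intro j
    have hq'0 : ∀ i, 0 ≤ min (q i) (g q i + c) :=
      fun i => le_min (hq0 i) (add_nonneg (hmaps q hq0 i) hcpos.le)
    have hgq0 : ∀ i, 0 ≤ g q i := hmaps q hq0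
    have hgqc0 : ∀ i, 0 ≤ g q i + c := fun i => add_nonneg (hgq0 i) hcpos.le
    -- bound 1 : g q' j < q j
    have hb1 : g (fun i => min (q i) (g q i + c)) j ≤ g (fun i => g q i + c) j :=
      hmono _ _ hq'0 hgqc0 (fun i => min_le_right _ _) j
    have hb1' : g (fun i => g q i + c) j ≤ g (g q) j + c :=
      trans (g q) c hgq0 hcpos.le j
    have hlt1 : g (fun i => min (q i) (g q i + c)) j < q j := by
      have := hεle j
      have : g (g q) j + c < q j := by
        rw [hc] at *
        linarith
      linarith
    -- bound 2 : g q' j < g q j + c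
    have hb2 : g (fun i => min (q i) (g q i + c)) j ≤ g q j :=
      hmono _ _ hq'0 hq0 (fun i => min_le_left _ _) j
    have hlt2 : g (fun i => min (q i) (g q i + c)) j < g q j + c := by linarith
    exact lt_min hlt1 hlt2

/-- If `f : ℝ≥0^d → ℝ≥0^d` is monotone and non-expansive with least fixpoint `μf`,
and `q ≥ μf` satisfies `f^{2^k}(q) < q` strictly in every component, then there is
`p` with `μf ≤ p ≤ q` and `f(p) < p` strictly in every component. -/
theorem strict_prefixpoint_of_power_iterate (d : ℕ)
    (f : (Fin d → ℝ) → Fin d → ℝ)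
    (hmaps : ∀ x : Fin d → ℝ, (∀ i, 0 ≤ x i) → ∀ i, 0 ≤ f x i)
    (hmono : ∀ x y : Fin d → ℝ, (∀ i, 0 ≤ x i) → (∀ i, 0 ≤ y i) → x ≤ y → f x ≤ f y)
    (hne : ∀ x y : Fin d → ℝ, (∀ i, 0 ≤ x i) → (∀ i, 0 ≤ y i) → ‖f x - f y‖ ≤ ‖x - y‖)
    (mu : Fin d → ℝ) (hmu0 : ∀ i, 0 ≤ mu i) (hfix : f mu = mu)
    (hleast : ∀ y : Fin d → ℝ, (∀ i, 0 ≤ y i) → f y = y → mu ≤ y)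
    (q : Fin d → ℝ) (hq0 : ∀ i, 0 ≤ q i) (hmuq : mu ≤ q)
    (k : ℕ) (hiter : ∀ i, f^[2^k] q i < q i) :
    ∃ p : Fin d → ℝ, mu ≤ p ∧ p ≤ q ∧ ∀ i, f p i < p i := by
  induction k generalizing q with
  | zero =>
      refine ⟨q, hmuq, le_refl q, ?_⟩
      intro i
      simpa using hiter i
  | succ k ih =>
      have hgmaps := iter_maps d f hmaps (2 ^ k)
      have hgmono := iter_mono d f hmaps hmono (2 ^ k)
      have hgne := iter_ne d f hmaps hne (2 ^ k)
      have hgfix : f^[2 ^ k] mu = mu := Function.iterate_fixed hfix (2 ^ k)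
      have h2 : ∀ i, f^[2 ^ k] (f^[2 ^ k] q) i < q i := by
        intro i
        have heq : f^[2 ^ (k + 1)] q = f^[2 ^ k] (f^[2 ^ k] q) := by
          rw [← Function.iterate_add_apply]
          congr 1
          rw [pow_succ]; ring
        rw [← heq]
        exact hiter i
      obtain ⟨q', hq'0, hmuq', hq'q, hstrict⟩ :=
        key_step d (f^[2 ^ k]) hgmaps hgmono hgne mu hmu0 hgfix q hq0 hmuq h2
      obtain ⟨p, hp1, hp2, hp3⟩ := ih q' hq'0 hmuq' hstrict
      exact ⟨p, hp1, le_trans hp2 hq'q, hp3⟩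
end

section
/- Let f : X → X be a monotone and non-expansive Picard operator on a 0-box X ⊆ ℝ_{≥0}^d with unique fixpoint μf. Then for all ε > 0 with μf + ε ∈ X (adding ε in every component), there exists a point p with μf ≤ p ≤ μf + ε such that f(p) < p strictly in every component. -/
open Filter

/-- Midpoint iteration sequence. -/
noncomputable def midSeq {d : ℕ} (f : (Fin d → ℝ) → Fin d → ℝ) (q : Fin d → ℝ) : ℕ → Fin d → ℝ
  | 0 => q
  | n + 1 => fun i => (midSeq f q n i + f (midSeq f q n) i) / 2

/-- For a monotone non-expansive Picard operator `f` on a 0-box `X` with unique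
fixpoint `μf`, for every `ε > 0` with `μf + ε ∈ X` there is a point `p` with
`μf ≤ p ≤ μf + ε` such that `f(p) < p` strictly in every component. -/
theorem picard_strict_prefixpoint (d : ℕ) (xstar : Fin d → ENNReal)
    (f : (Fin d → ℝ) → Fin d → ℝ)
    (hmaps : ∀ x ∈ zeroBox d xstar, f x ∈ zeroBox d xstar)
    (hmono : ∀ x ∈ zeroBox d xstar, ∀ y ∈ zeroBox d xstar, x ≤ y → f x ≤ f y)
    (hne : ∀ x ∈ zeroBox d xstar, ∀ y ∈ zeroBox d xstar, ‖f x - f y‖ ≤ ‖x - y‖)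
    (mu : Fin d → ℝ) (hmuX : mu ∈ zeroBox d xstar) (hfix : f mu = mu)
    (huniq : ∀ y ∈ zeroBox d xstar, f y = y → y = mu)
    (hpicard : ∀ x ∈ zeroBox d xstar, Tendsto (fun n => f^[n] x) atTop (nhds mu)) :
    ∀ ε : ℝ, 0 < ε → (fun i => mu i + ε) ∈ zeroBox d xstar →
      ∃ p ∈ zeroBox d xstar, mu ≤ p ∧ (∀ i, p i ≤ mu i + ε) ∧ ∀ i, f p i < p i := by
  intro ε hε hqX
  set q : Fin d → ℝ := fun i => mu i + ε with hq
  -- the box is downward closed among nonnegative vectors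
  have hdown : ∀ x : Fin d → ℝ, (∀ i, 0 ≤ x i) → ∀ y ∈ zeroBox d xstar, x ≤ y →
      x ∈ zeroBox d xstar := by
    intro x hx0 y hy hxy i
    exact ⟨hx0 i, le_trans (ENNReal.ofReal_le_ofReal (hxy i)) ((hy i).2)⟩
  have hmuq : mu ≤ q := by
    intro i; simp only [hq]; linarith
  -- mu ≤ f x for x ∈ X with mu ≤ x
  have hmulef : ∀ x ∈ zeroBox d xstar, mu ≤ x → mu ≤ f x := by
    intro x hx hmx
    have := hmono mu hmuX x hx hmx
    rwa [hfix] at this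
  -- f q ≤ q
  have hnormq : ‖q - mu‖ ≤ ε := by
    rw [pi_norm_le_iff_of_nonneg hε.le]
    intro i
    simp [hq, Real.norm_eq_abs, abs_of_nonneg hε.le]
  have hfq : f q ≤ q := by
    intro i
    have h1 : f q i - f mu i ≤ ‖f q - f mu‖ := by
      refine le_trans (le_abs_self _) ?_
      simpa [Real.norm_eq_abs] using norm_le_pi_norm (f q - f mu) i
    have h2 : ‖f q - f mu‖ ≤ ‖q - mu‖ := hne q hqX mu hmuX
    have h3 : f mu i = mu i := by rw [hfix]
    have : f q i ≤ mu i + ε := by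
      have := le_trans h1 (le_trans h2 hnormq)
      linarith
    simpa [hq] using this
  set p : ℕ → Fin d → ℝ := midSeq f q with hp
  -- invariant
  have hinv : ∀ n, p n ∈ zeroBox d xstar ∧ mu ≤ p n ∧ p n ≤ q ∧ f (p n) ≤ p n := by
    intro n
    induction n with
    | zero => exact ⟨hqX, hmuq, le_refl _, hfq⟩
    | succ n ih =>
      obtain ⟨hX, hmle, hleq, hpre⟩ := ih
      have hmf : mu ≤ f (p n) := hmulef _ hX hmle
      have hstep : p (n + 1) = fun i => (p n i + f (p n) i) / 2 := rfl
      have hle : p (n + 1) ≤ p n := by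
        rw [hstep]; intro i; dsimp only
        have := hpre i; linarith
      have hmle' : mu ≤ p (n + 1) := by
        rw [hstep]; intro i; dsimp only
        have := hmle i; have := hmf i; linarith
      have h0 : ∀ i, 0 ≤ p (n + 1) i := fun i => le_trans (hmuX i).1 (hmle' i)
      have hX' : p (n + 1) ∈ zeroBox d xstar :=
        hdown _ h0 (p n) hX hle
      have hpre' : f (p (n + 1)) ≤ p (n + 1) := by
        intro i
        have h1 : f (p (n + 1)) i ≤ f (p n) i := hmono _ hX' _ hX hle i
        have h2 : f (p n) i ≤ p (n + 1) i := by
          rw [hstep]; dsimp only; have := hpre i; linarith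
        exact le_trans h1 h2
      exact ⟨hX', hmle', le_trans hle hleq, hpre'⟩
  -- the sequence is componentwise antitone
  have hanti : ∀ i, Antitone fun n => p n i := by
    intro i
    apply antitone_nat_of_succ_le
    intro n
    have hpre := (hinv n).2.2.2 i
    show (p n i + f (p n) i) / 2 ≤ p n i
    linarith
  have hbdd : ∀ i, BddBelow (Set.range fun n => p n i) := by
    intro i
    exact ⟨mu i, by rintro x ⟨n, rfl⟩; exact (hinv n).2.1 i⟩
  set L : Fin d → ℝ := fun i => ⨅ n, p n i with hL
  have hlimi : ∀ i, Tendsto (fun n => p n i) atTop (nhds (L i)) := by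
    intro i
    exact tendsto_atTop_ciInf (hanti i) (hbdd i)
  have hmuL : mu ≤ L := by
    intro i
    exact le_ciInf fun n => (hinv n).2.1 i
  have hLp : ∀ n, L ≤ p n := by
    intro n i
    exact ciInf_le (hbdd i) n
  have hLX : L ∈ zeroBox d xstar :=
    hdown _ (fun i => le_trans (hmuX i).1 (hmuL i)) q hqX (le_trans (hLp 0) (le_refl _))
  have hpL : Tendsto p atTop (nhds L) := tendsto_pi_nhds.mpr hlimi
  -- f (p n) → f L using nonexpansiveness
  have hnorm0 : Tendsto (fun n => ‖p n - L‖) atTop (nhds 0) :=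
    tendsto_iff_norm_sub_tendsto_zero.mp hpL
  have hfnorm0 : Tendsto (fun n => ‖f (p n) - f L‖) atTop (nhds 0) := by
    refine squeeze_zero (fun n => norm_nonneg _) (fun n => hne _ (hinv n).1 _ hLX) hnorm0
  have hfpL : Tendsto (fun n => f (p n)) atTop (nhds (f L)) :=
    tendsto_iff_norm_sub_tendsto_zero.mpr hfnorm0
  -- L is a fixpoint, hence L = mu
  have hfLL : f L = L := by
    funext i
    have h1 : Tendsto (fun n => p (n + 1) i) atTop (nhds (L i)) :=
      (hlimi i).comp (tendsto_add_atTop_nat 1)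
    have h2 : Tendsto (fun n => f (p n) i) atTop (nhds (f L i)) :=
      ((continuous_apply i).continuousAt.tendsto).comp hfpL
    have h3 : Tendsto (fun n => (p n i + f (p n) i) / 2) atTop
        (nhds ((L i + f L i) / 2)) := by
      exact ((hlimi i).add h2).div_const 2
    have h4 : (fun n => p (n + 1) i) = fun n => (p n i + f (p n) i) / 2 := rfl
    rw [h4] at h1
    have := tendsto_nhds_unique h1 h3
    linarith
  have hLmu : L = mu := huniq L hLX hfLL
  -- persistence of strictness
  have hpers : ∀ i m k, m ≤ k → f (p m) i < p m i → f (p k) i < p k i := by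
    intro i m k hmk hstrict
    induction k, hmk using Nat.le_induction with
    | base => exact hstrict
    | succ n hmn ih =>
      have hle : p (n + 1) ≤ p n := fun j => hanti j (Nat.le_succ n)
      have h1 : f (p (n + 1)) i ≤ f (p n) i :=
        hmono _ (hinv (n + 1)).1 _ (hinv n).1 hle i
      have h2 : f (p n) i < p (n + 1) i := by
        show f (p n) i < (p n i + f (p n) i) / 2
        linarith
      exact lt_of_le_of_lt h1 h2
  -- each component eventually becomes strict
  have hev : ∀ i, ∃ n, f (p n) i < p n i := by
    intro i
    by_contra hcon
    push_neg at hcon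
    have heq : ∀ n, f (p n) i = p n i := fun n =>
      le_antisymm ((hinv n).2.2.2 i) (hcon n)
    have hconst : ∀ n, p n i = q i := by
      intro n
      induction n with
      | zero => rfl
      | succ n ih =>
        have : p (n + 1) i = (p n i + f (p n) i) / 2 := rfl
        rw [this, heq n, ih]; ring
    have : Tendsto (fun _ : ℕ => q i) atTop (nhds (L i)) := by
      have := hlimi i
      simpa [funext hconst] using this
    have hLq : L i = q i := tendsto_nhds_unique this tendsto_const_nhds
    rw [hLmu] at hLq
    simp only [hq] at hLq
    linarith
  choose ns hns using hev
  set N : ℕ := Finset.univ.sup ns with hN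
  refine ⟨p N, (hinv N).1, (hinv N).2.1, ?_, ?_⟩
  · intro i
    simpa [hq] using (hinv N).2.2.1 i
  · intro i
    exact hpers i (ns i) N (Finset.le_sup (Finset.mem_univ i)) (hns i)
end
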